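/- Let A be a special automaton over the free group F of rank m ≥ 2 whose final state z₀ has at least one outgoing transition, and let R = L(A). Then there exist subsets R₁, R₂ ⊆ F such that: (i) R₁ = L(A₁) for some special automaton A₁ over F (in particular 1 ∉ R₁); (ii) R₂ is a special monoid (so 1 ∈ R₂); (iii) |uv| = |u| + |v| for all u ∈ R₁ and v ∈ R₂; (iv) R = {uv : u ∈ R₁, v ∈ R₂} and the map (u,v) ↦ uv from R₁ × R₂ to R is a bijection; (v) consequently g_R(t) = g_{R₁}(t) · g*_{R₂}(t) for all real t ∈ (−1,1). -/

import Mathlib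

open Filter Set

noncomputable section

/-- The free group of rank `m`. -/
abbrev FG (m : ℕ) := FreeGroup (Fin m)

/-- The length of the reduced word of `g`. -/
def glen {m : ℕ} (g : FG m) : ℕ := (FreeGroup.toWord g).length

/-- The cardinality of the sphere of radius `k` in the free group of rank `m`,
as a real number: `1` if `k = 0` and `2m(2m-1)^(k-1)` otherwise. -/
def sphereCard (m k : ℕ) : ℝ :=
  if k = 0 then 1 else 2 * (m : ℝ) * (2 * (m : ℝ) - 1) ^ (k - 1)

/-- `n_k(R)`: the number of elements of length `k` in `R`. -/
def nk {m : ℕ} (R : Set (FG m)) (k : ℕ) : ℕ := {g ∈ R | glen g = k}.ncard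

/-- `f_k(R) = n_k(R) / |S_k|`: the frequency of elements of `R` among words of length `k`. -/
def fk {m : ℕ} (R : Set (FG m)) (k : ℕ) : ℝ := (nk R k : ℝ) / sphereCard m k

/-- The frequency generating function `g_R(t) = ∑ f_k(R) t^k`. -/
def genFun {m : ℕ} (R : Set (FG m)) (t : ℝ) : ℝ := ∑' k : ℕ, fk R k * t ^ k

/-- The adjusted generating function `g*_R(t) = ∑ n_k(R) (t/(2m-1))^k`. -/
def genFunStar {m : ℕ} (R : Set (FG m)) (t : ℝ) : ℝ :=
  ∑' k : ℕ, (nk R k : ℝ) * (t / (2 * (m : ℝ) - 1)) ^ k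

/-- `R` is thick: `lim_{t→1⁻} (1-t)·g_R(t)` exists and is positive. -/
def IsThick {m : ℕ} (R : Set (FG m)) : Prop :=
  ∃ c : ℝ, 0 < c ∧
    Tendsto (fun t => (1 - t) * genFun R t) (nhdsWithin 1 (Set.Iio 1)) (nhds c)

/-- `R` is exponentially negligible (exponentially λ-measurable): there is `δ ∈ (0,1)`
with `f_k(R) < δ^k` for all sufficiently large `k`. -/
def ExpNegligible {m : ℕ} (R : Set (FG m)) : Prop :=
  ∃ δ : ℝ, 0 < δ ∧ δ < 1 ∧ ∀ᶠ k : ℕ in atTop, fk R k < δ ^ k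

/-- `R ⊆ F` is a regular set if the language of reduced words of its elements
(over the alphabet `Σ = X ∪ X⁻¹`, encoded as `Fin m × Bool`) is a regular language. -/
def IsRegularSet {m : ℕ} (R : Set (FG m)) : Prop :=
  Language.IsRegular {w : List (Fin m × Bool) | ∃ g ∈ R, FreeGroup.toWord g = w}

/-- The cone `C(w) = { wf : |wf| = |w| + |f| }`. -/
def cone {m : ℕ} (w : FG m) : Set (FG m) :=
  {g | ∃ f, g = w * f ∧ glen g = glen w + glen f}

/-- The right cone `C[w] = { fw : |fw| = |f| + |w| }`. -/
def coneR {m : ℕ} (w : FG m) : Set (FG m) :=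
  {g | ∃ f, g = f * w ∧ glen g = glen f + glen w}

/-- The double-based cone `C(u,v) = { ufv : |ufv| = |u| + |f| + |v| }`. -/
def dcone {m : ℕ} (u v : FG m) : Set (FG m) :=
  {g | ∃ f, g = u * f * v ∧ glen g = glen u + glen f + glen v}

/-- The prefix closure of `R`. -/
def prefixClosure {m : ℕ} (R : Set (FG m)) : Set (FG m) :=
  {p | ∃ g ∈ R, ∃ s, g = p * s ∧ glen g = glen p + glen s}

/-- A finite deterministic partial automaton over the alphabet
`Σ = X ∪ X⁻¹` (encoded as `Fin m × Bool`), with one initial and one final state. -/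
structure PAut (m : ℕ) where
  n : ℕ
  step : Fin n → Fin m × Bool → Option (Fin n)
  start : Fin n
  accept : Fin n

namespace PAut

variable {m : ℕ}

/-- Run the automaton from state `s` on the word `w`. -/
def evalFrom (A : PAut m) : Fin A.n → List (Fin m × Bool) → Option (Fin A.n)
  | s, [] => some s
  | s, a :: w =>
    match A.step s a with
    | none => none
    | some s' => A.evalFrom s' w

/-- The set of words accepted by `A`. -/
def words (A : PAut m) : Set (List (Fin m × Bool)) :=
  {w | A.evalFrom A.start w = some A.accept}

/-- The language of `A`, identified with a subset of the free group. -/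
def lang (A : PAut m) : Set (FG m) :=
  (fun w => FreeGroup.mk w) '' A.words

/-- Conditions (c)–(f) of a special automaton:
(c) every state is reachable from the initial state;
(d) the final state is reachable from every state;
(e) all transitions entering a given state carry the same label (the type of the state);
(f) if a state has type `x`, no transition labeled `x⁻¹` leaves it. -/
def CoreSpecial (A : PAut m) : Prop :=
  (∀ s, ∃ w, A.evalFrom A.start w = some s) ∧
  (∀ s, ∃ w, A.evalFrom s w = some A.accept) ∧
  (∀ s₁ a₁ s₂ a₂ s, A.step s₁ a₁ = some s → A.step s₂ a₂ = some s → a₁ = a₂) ∧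
  (∀ s' a s, A.step s' a = some s → A.step s (a.1, !a.2) = none)

/-- A special automaton over the free group: conditions (a)–(f), with distinct
initial and final states and no transition entering the initial state. -/
def IsSpecial (A : PAut m) : Prop :=
  A.start ≠ A.accept ∧ (∀ s a, A.step s a ≠ some A.start) ∧ A.CoreSpecial

/-- A special monoid automaton: conditions (c)–(f), with the initial state equal to
the final state. -/
def IsSpecialMonoidAut (A : PAut m) : Prop :=
  A.start = A.accept ∧ A.CoreSpecial

/-- `A` is `Σ`-complete: every state `s` has a type `x` and for every label
`y ≠ x⁻¹` the transition `δ(s,y)` is defined. -/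
def SigmaComplete (A : PAut m) : Prop :=
  ∀ s, ∃ a, (∃ s', A.step s' a = some s) ∧
    ∀ b, b ≠ (a.1, !a.2) → (A.step s b).isSome

end PAut

/-- A special monoid: the language of a special monoid automaton. -/
def IsSpecialMonoid {m : ℕ} (M : Set (FG m)) : Prop :=
  ∃ A : PAut m, A.IsSpecialMonoidAut ∧ M = A.lang

/-- A thick monoid: the language of a `Σ`-complete special monoid automaton. -/
def IsThickMonoid {m : ℕ} (M : Set (FG m)) : Prop :=
  ∃ A : PAut m, A.IsSpecialMonoidAut ∧ A.SigmaComplete ∧ M = A.lang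

/-! Every accepted run of `A` ends in the final state `z₀`; cutting it at its first visit of `z₀`
splits the accepted word uniquely as `u ++ v`, where `u` is accepted by `A` with the transitions
leaving `z₀` removed and `v` labels a loop at `z₀`. Restricting these two automata to the states
reachable from their initial states gives the special automaton `A₁` and the special monoid
automaton `A₂`. All words involved are reduced, so lengths add and `n_k(R)` is the convolution of
`n_i(R₁)` and `n_j(R₂)`. Since `1 ∉ R₁` and `|S_(i+j)| = |S_i| (2m-1)^j` for `i ≥ 1`, this
convolution is the Cauchy product of `g_(R₁)` and `g*_(R₂)`, and both series converge absolutely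
because `n_k ≤ |S_k|`. -/

def IsPrefixFree {β : Type*} (W : Set (List β)) : Prop :=
  ∀ u ∈ W, ∀ x, u ++ x ∈ W → x = []

theorem IsPrefixFree.append_inj {β : Type*} {W : Set (List β)} (hW : IsPrefixFree W)
    {u u' v v' : List β} (hu : u ∈ W) (hu' : u' ∈ W) (h : u ++ v = u' ++ v') :
    u = u' ∧ v = v' := by
  have hu_eq : u = u' := by
    rcases List.prefix_or_prefix_of_prefix (h ▸ List.prefix_append u v) (List.prefix_append u' v')
      with ⟨x, rfl⟩ | ⟨x, rfl⟩
    · simp [hW u hu x hu']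
    · simp [hW u' hu' x hu]
  subst hu_eq
  exact ⟨rfl, List.append_cancel_left h⟩

namespace FreeGroup

variable {α : Type*}

theorem mk_image_image2_append (W₁ W₂ : Set (List (α × Bool))) :
    mk '' image2 (· ++ ·) W₁ W₂ = image2 (· * ·) (mk '' W₁) (mk '' W₂) :=
  image_image2_distrib fun _ _ => mul_mk.symm

variable [DecidableEq α] {W₁ W₂ : Set (List (α × Bool))}

theorem IsReduced.toWord_mk {L : List (α × Bool)} (h : IsReduced L) : (mk L).toWord = L := by
  rw [FreeGroup.toWord_mk, h.reduce_eq]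

theorem IsReduced.toWord_mk_mul_mk {p q : List (α × Bool)} (h : IsReduced (p ++ q)) :
    (mk p * mk q).toWord = (mk p).toWord ++ (mk q).toWord := by
  rw [mul_mk, h.toWord_mk, (h.infix (List.prefix_append p q).isInfix).toWord_mk,
    (h.infix (List.suffix_append p q).isInfix).toWord_mk]

theorem toWord_mul_of_mem_image (hred : ∀ p ∈ W₁, ∀ q ∈ W₂, IsReduced (p ++ q)) :
    ∀ u ∈ mk '' W₁, ∀ v ∈ mk '' W₂, (u * v).toWord = u.toWord ++ v.toWord := by
  rintro _ ⟨p, hp, rfl⟩ _ ⟨q, hq, rfl⟩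
  exact (hred p hp q hq).toWord_mk_mul_mk

theorem mul_inj_of_mem_image (hW₁ : IsPrefixFree W₁)
    (hred : ∀ p ∈ W₁, ∀ q ∈ W₂, IsReduced (p ++ q)) :
    ∀ u ∈ mk '' W₁, ∀ v ∈ mk '' W₂, ∀ u' ∈ mk '' W₁, ∀ v' ∈ mk '' W₂,
      u * v = u' * v' → u = u' ∧ v = v' := by
  rintro _ ⟨p, hp, rfl⟩ _ ⟨q, hq, rfl⟩ _ ⟨p', hp', rfl⟩ _ ⟨q', hq', rfl⟩ h
  have hpq := congrArg toWord h
  rw [mul_mk, mul_mk, (hred p hp q hq).toWord_mk, (hred p' hp' q' hq').toWord_mk] at hpq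
  obtain ⟨rfl, rfl⟩ := hW₁.append_inj hp hp' hpq
  exact ⟨rfl, rfl⟩

end FreeGroup

namespace PAut

variable {m : ℕ} {A : PAut m}

def EntryLabelUnique (A : PAut m) : Prop :=
  ∀ s₁ a₁ s₂ a₂ s, A.step s₁ a₁ = some s → A.step s₂ a₂ = some s → a₁ = a₂

def NoBacktrack (A : PAut m) : Prop :=
  ∀ s' a s, A.step s' a = some s → A.step s (a.1, !a.2) = none

def Reachable (A : PAut m) (s t : Fin A.n) : Prop :=
  ∃ w, A.evalFrom s w = some t

theorem coreSpecial_iff :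
    A.CoreSpecial ↔ (∀ s, A.Reachable A.start s) ∧ (∀ s, A.Reachable s A.accept) ∧
      A.EntryLabelUnique ∧ A.NoBacktrack :=
  Iff.rfl

theorem CoreSpecial.noBacktrack (hA : A.CoreSpecial) : A.NoBacktrack :=
  hA.2.2.2

@[simp]
theorem evalFrom_nil (s : Fin A.n) : A.evalFrom s [] = some s := rfl

theorem evalFrom_cons_of_step {s s' : Fin A.n} {a : Fin m × Bool} (h : A.step s a = some s')
    (w : List (Fin m × Bool)) : A.evalFrom s (a :: w) = A.evalFrom s' w := by
  simp [evalFrom, h]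

theorem evalFrom_cons_of_step_eq_none {s : Fin A.n} {a : Fin m × Bool} (h : A.step s a = none)
    (w : List (Fin m × Bool)) : A.evalFrom s (a :: w) = none := by
  simp [evalFrom, h]

theorem evalFrom_cons_eq_some {s t : Fin A.n} {a : Fin m × Bool} {w : List (Fin m × Bool)} :
    A.evalFrom s (a :: w) = some t ↔ ∃ s', A.step s a = some s' ∧ A.evalFrom s' w = some t := by
  cases h : A.step s a with
  | none => simp [evalFrom_cons_of_step_eq_none h]
  | some s' => simp [evalFrom_cons_of_step h]

theorem evalFrom_append (s : Fin A.n) (u v : List (Fin m × Bool)) :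
    A.evalFrom s (u ++ v) = (A.evalFrom s u).bind (A.evalFrom · v) := by
  induction u generalizing s with
  | nil => rfl
  | cons a u ih =>
    cases h : A.step s a with
    | none => simp [evalFrom_cons_of_step_eq_none h]
    | some s' => simp [evalFrom_cons_of_step h, ih]

theorem Reachable.refl (s : Fin A.n) : A.Reachable s s := ⟨[], rfl⟩

theorem Reachable.tail {s t t' : Fin A.n} {a : Fin m × Bool} (h : A.Reachable s t)
    (ht : A.step t a = some t') : A.Reachable s t' := by
  obtain ⟨w, hw⟩ := h
  exact ⟨w ++ [a], by simp [evalFrom_append, hw, evalFrom_cons_of_step ht]⟩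

theorem NoBacktrack.isReduced_cons (hA : A.NoBacktrack) {s s' t : Fin A.n} {a : Fin m × Bool}
    {w : List (Fin m × Bool)} (hs : A.step s a = some s') (hw : A.evalFrom s' w = some t) :
    FreeGroup.IsReduced (a :: w) := by
  induction w generalizing a s s' with
  | nil => exact FreeGroup.IsReduced.singleton
  | cons b w ih =>
    obtain ⟨s'', hb, hw⟩ := evalFrom_cons_eq_some.mp hw
    refine FreeGroup.isReduced_cons_cons.mpr ⟨fun h₁ => ?_, ih hb hw⟩
    by_contra h₂
    have : b = (a.1, !a.2) := Prod.ext h₁.symm (Bool.eq_not_iff.mpr (Ne.symm h₂))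
    simp [this, hA s a s' hs] at hb

theorem NoBacktrack.isReduced (hA : A.NoBacktrack) {s t : Fin A.n} {w : List (Fin m × Bool)}
    (h : A.evalFrom s w = some t) : FreeGroup.IsReduced w := by
  cases w with
  | nil => exact FreeGroup.IsReduced.nil
  | cons a w =>
    obtain ⟨s', hs, hw⟩ := evalFrom_cons_eq_some.mp h
    exact hA.isReduced_cons hs hw

theorem evalFrom_map {B : PAut m} (φ : Fin B.n → Fin A.n)
    (hφ : ∀ t a, (B.step t a).map φ = A.step (φ t) a) (t : Fin B.n) (w : List (Fin m × Bool)) :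
    (B.evalFrom t w).map φ = A.evalFrom (φ t) w := by
  induction w generalizing t with
  | nil => rfl
  | cons a w ih =>
    cases h : B.step t a with
    | none =>
      have : A.step (φ t) a = none := by rw [← hφ, h, Option.map_none]
      rw [evalFrom_cons_of_step_eq_none h, evalFrom_cons_of_step_eq_none this, Option.map_none]
    | some t' =>
      have : A.step (φ t) a = some (φ t') := by rw [← hφ, h, Option.map_some]
      rw [evalFrom_cons_of_step h, evalFrom_cons_of_step this, ih]

def reachableEquiv (A : PAut m) (s₀ : Fin A.n) :
    {s // A.Reachable s₀ s} ≃ Fin (Nat.card {s // A.Reachable s₀ s}) :=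
  Finite.equivFin _

/-- The sub-automaton of the states reachable from `s₀`, started at `s₀` and accepting at `z`. -/
@[reducible]
def restrict (A : PAut m) (s₀ z : Fin A.n) (hz : A.Reachable s₀ z) : PAut m where
  n := Nat.card {s // A.Reachable s₀ s}
  step t a := (A.step ((A.reachableEquiv s₀).symm t) a).pmap
    (fun s hs => A.reachableEquiv s₀ ⟨s, hs⟩) (fun _ h => ((A.reachableEquiv s₀).symm t).2.tail h)
  start := A.reachableEquiv s₀ ⟨s₀, .refl s₀⟩
  accept := A.reachableEquiv s₀ ⟨z, hz⟩

section restrict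

variable {s₀ z : Fin A.n} {hz : A.Reachable s₀ z}

def restrictIncl (A : PAut m) (s₀ : Fin A.n) :
    Fin (Nat.card {s // A.Reachable s₀ s}) → Fin A.n :=
  fun t => (A.reachableEquiv s₀).symm t

theorem restrictIncl_injective : (A.restrictIncl s₀).Injective :=
  Subtype.val_injective.comp (A.reachableEquiv s₀).symm.injective

theorem reachable_restrictIncl (t : Fin (A.restrict s₀ z hz).n) :
    A.Reachable s₀ (A.restrictIncl s₀ t) :=
  ((A.reachableEquiv s₀).symm t).2

@[simp]
theorem restrictIncl_start : A.restrictIncl s₀ (A.restrict s₀ z hz).start = s₀ := by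
  simp [restrictIncl]

@[simp]
theorem restrictIncl_accept : A.restrictIncl s₀ (A.restrict s₀ z hz).accept = z := by
  simp [restrictIncl]

theorem map_restrict_step (t : Fin (A.restrict s₀ z hz).n) (a : Fin m × Bool) :
    ((A.restrict s₀ z hz).step t a).map (A.restrictIncl s₀) =
      A.step (A.restrictIncl s₀ t) a := by
  dsimp only [restrict]
  rw [Option.map_pmap]
  simp [restrictIncl]

theorem step_restrictIncl {t t' : Fin (A.restrict s₀ z hz).n} {a : Fin m × Bool}
    (h : (A.restrict s₀ z hz).step t a = some t') :
    A.step (A.restrictIncl s₀ t) a = some (A.restrictIncl s₀ t') := by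
  rw [← map_restrict_step, h, Option.map_some]

theorem restrict_evalFrom_eq_some_iff {t t' : Fin (A.restrict s₀ z hz).n}
    {w : List (Fin m × Bool)} :
    (A.restrict s₀ z hz).evalFrom t w = some t' ↔
      A.evalFrom (A.restrictIncl s₀ t) w = some (A.restrictIncl s₀ t') := by
  rw [← evalFrom_map _ map_restrict_step, ← Option.map_some,
    (Option.map_injective restrictIncl_injective).eq_iff]

theorem words_restrict : (A.restrict s₀ z hz).words = {w | A.evalFrom s₀ w = some z} := by
  ext w
  exact restrict_evalFrom_eq_some_iff.trans (by rw [restrictIncl_start, restrictIncl_accept]; rfl)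

theorem restrict_reachable_start (t : Fin (A.restrict s₀ z hz).n) :
    (A.restrict s₀ z hz).Reachable (A.restrict s₀ z hz).start t := by
  obtain ⟨w, hw⟩ := reachable_restrictIncl t
  exact ⟨w, restrict_evalFrom_eq_some_iff.mpr (by rwa [restrictIncl_start])⟩

theorem coreSpecial_restrict (hd : ∀ s, A.Reachable s₀ s → A.Reachable s z)
    (he : A.EntryLabelUnique) (hf : A.NoBacktrack) : (A.restrict s₀ z hz).CoreSpecial := by
  refine ⟨restrict_reachable_start, fun t => ?_, fun t₁ a₁ t₂ a₂ t h₁ h₂ => ?_, fun t' a t h => ?_⟩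
  · obtain ⟨w, hw⟩ := hd _ (reachable_restrictIncl t)
    exact ⟨w, restrict_evalFrom_eq_some_iff.mpr (by rwa [restrictIncl_accept])⟩
  · exact he _ _ _ _ _ (step_restrictIncl h₁) (step_restrictIncl h₂)
  · have := hf _ _ _ (step_restrictIncl h)
    rwa [← map_restrict_step, Option.map_eq_none_iff] at this

end restrict

@[reducible]
def haltAtAccept (A : PAut m) : PAut m where
  n := A.n
  step s a := if s = A.accept then none else A.step s a
  start := A.start
  accept := A.accept

theorem step_of_haltAtAccept_step {s t : Fin A.n} {a : Fin m × Bool}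
    (h : A.haltAtAccept.step s a = some t) : A.step s a = some t := by
  by_cases hs : s = A.accept <;> simp_all

theorem evalFrom_of_haltAtAccept_evalFrom {s t : Fin A.n} {w : List (Fin m × Bool)}
    (h : A.haltAtAccept.evalFrom s w = some t) : A.evalFrom s w = some t := by
  induction w generalizing s with
  | nil => exact h
  | cons a w ih =>
    obtain ⟨s', hs', hw⟩ := evalFrom_cons_eq_some.mp h
    exact evalFrom_cons_eq_some.mpr ⟨s', step_of_haltAtAccept_step hs', ih hw⟩

theorem haltAtAccept_entryLabelUnique (hA : A.EntryLabelUnique) :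
    A.haltAtAccept.EntryLabelUnique := fun _ _ _ _ _ h₁ h₂ =>
  hA _ _ _ _ _ (step_of_haltAtAccept_step h₁) (step_of_haltAtAccept_step h₂)

theorem haltAtAccept_noBacktrack (hA : A.NoBacktrack) : A.haltAtAccept.NoBacktrack := by
  intro s' a s h
  cases h' : A.haltAtAccept.step s (a.1, !a.2) with
  | none => rfl
  | some t =>
    have := hA _ _ _ (step_of_haltAtAccept_step h)
    rw [step_of_haltAtAccept_step h'] at this
    cases this

theorem exists_append_of_evalFrom_eq_accept {s : Fin A.n} {w : List (Fin m × Bool)}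
    (h : A.evalFrom s w = some A.accept) :
    ∃ u v, w = u ++ v ∧ A.haltAtAccept.evalFrom s u = some A.accept ∧
      A.evalFrom A.accept v = some A.accept := by
  induction w generalizing s with
  | nil =>
    obtain rfl : s = A.accept := Option.some_injective _ h
    exact ⟨[], [], rfl, rfl, rfl⟩
  | cons a w ih =>
    by_cases hs : s = A.accept
    · subst hs
      exact ⟨[], a :: w, rfl, rfl, h⟩
    obtain ⟨s', hs', hw⟩ := evalFrom_cons_eq_some.mp h
    obtain ⟨u, v, rfl, hu, hv⟩ := ih hw
    refine ⟨a :: u, v, rfl, evalFrom_cons_eq_some.mpr ⟨s', ?_, hu⟩, hv⟩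
    simpa [hs] using hs'

theorem Reachable.haltAtAccept {s : Fin A.n} (h : A.Reachable s A.accept) :
    A.haltAtAccept.Reachable s A.accept := by
  obtain ⟨w, hw⟩ := h
  obtain ⟨u, -, -, hu, -⟩ := exists_append_of_evalFrom_eq_accept hw
  exact ⟨u, hu⟩

theorem eq_nil_of_haltAtAccept_evalFrom_append {s : Fin A.n} {u x : List (Fin m × Bool)}
    (hu : A.haltAtAccept.evalFrom s u = some A.accept)
    (hux : A.haltAtAccept.evalFrom s (u ++ x) = some A.accept) : x = [] := by
  rw [evalFrom_append, hu, Option.bind_some] at hux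
  cases x with
  | nil => rfl
  | cons a x => simp [evalFrom_cons_of_step_eq_none] at hux

theorem NoBacktrack.mem_lang_iff (hA : A.NoBacktrack) {g : FG m} :
    g ∈ A.lang ↔ g.toWord ∈ A.words := by
  constructor
  · rintro ⟨w, hw, rfl⟩
    rwa [(hA.isReduced hw).toWord_mk]
  · exact fun hg => ⟨g.toWord, hg, FreeGroup.mk_toWord⟩

theorem NoBacktrack.one_mem_lang_iff (hA : A.NoBacktrack) : 1 ∈ A.lang ↔ A.start = A.accept := by
  rw [hA.mem_lang_iff, FreeGroup.toWord_one]
  exact Option.some_inj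

theorem IsSpecial.one_notMem_lang (hA : A.IsSpecial) : 1 ∉ A.lang :=
  hA.2.2.noBacktrack.one_mem_lang_iff.not.mpr hA.1

theorem IsSpecialMonoidAut.one_mem_lang (hA : A.IsSpecialMonoidAut) : 1 ∈ A.lang :=
  hA.2.noBacktrack.one_mem_lang_iff.mpr hA.1

theorem IsSpecial.haltAtAccept_reachable (hA : A.IsSpecial) :
    A.haltAtAccept.Reachable A.start A.accept :=
  ((coreSpecial_iff.mp hA.2.2).1 A.accept).haltAtAccept

/-- The runs of `A` from the initial state up to the first visit of the final state. -/
abbrev headAut (A : PAut m) (hz : A.haltAtAccept.Reachable A.start A.accept) : PAut m :=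
  A.haltAtAccept.restrict A.start A.accept hz

abbrev loopAut (A : PAut m) : PAut m :=
  A.restrict A.accept A.accept (.refl A.accept)

variable (hz : A.haltAtAccept.Reachable A.start A.accept)

theorem isSpecial_headAut (hA : A.IsSpecial) : (A.headAut hz).IsSpecial := by
  obtain ⟨hne, hinit, hcore⟩ := hA
  obtain ⟨-, hd, he, hf⟩ := coreSpecial_iff.mp hcore
  refine ⟨fun h => hne ?_, fun t a h => ?_, coreSpecial_restrict (fun s _ => (hd s).haltAtAccept)
    (haltAtAccept_entryLabelUnique he) (haltAtAccept_noBacktrack hf)⟩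
  · have := congrArg (A.haltAtAccept.restrictIncl A.start) h
    rwa [restrictIncl_start, restrictIncl_accept] at this
  · have := step_of_haltAtAccept_step (step_restrictIncl h)
    exact hinit _ _ (by rwa [restrictIncl_start] at this)

theorem isSpecialMonoidAut_loopAut (hA : A.CoreSpecial) : A.loopAut.IsSpecialMonoidAut := by
  obtain ⟨-, hd, he, hf⟩ := coreSpecial_iff.mp hA
  exact ⟨rfl, coreSpecial_restrict (fun s _ => hd s) he hf⟩

theorem isPrefixFree_words_headAut : IsPrefixFree (A.headAut hz).words := by
  intro u hu x hux
  rw [headAut, words_restrict] at hu hux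
  exact eq_nil_of_haltAtAccept_evalFrom_append hu hux

theorem words_eq_image2_append :
    A.words = image2 (· ++ ·) (A.headAut hz).words A.loopAut.words := by
  rw [headAut, loopAut, words_restrict, words_restrict]
  ext w
  constructor
  · intro hw
    obtain ⟨u, v, rfl, hu, hv⟩ := exists_append_of_evalFrom_eq_accept hw
    exact ⟨u, hu, v, hv, rfl⟩
  · rintro ⟨u, hu, v, hv, rfl⟩
    show A.evalFrom A.start (u ++ v) = some A.accept
    rw [evalFrom_append, evalFrom_of_haltAtAccept_evalFrom hu, Option.bind_some, hv]

theorem lang_eq_mul :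
    A.lang = {g | ∃ u ∈ (A.headAut hz).lang, ∃ v ∈ A.loopAut.lang, g = u * v} := by
  rw [lang, words_eq_image2_append hz, FreeGroup.mk_image_image2_append]
  ext g
  simp only [mem_image2, eq_comm]
  rfl

theorem isReduced_append_of_mem_words (hA : A.NoBacktrack) :
    ∀ p ∈ (A.headAut hz).words, ∀ q ∈ A.loopAut.words, FreeGroup.IsReduced (p ++ q) :=
  fun p hp q hq => hA.isReduced
    (show p ++ q ∈ A.words from words_eq_image2_append hz ▸ mem_image2_of_mem hp hq)

theorem glen_mul_of_mem_lang (hA : A.NoBacktrack) :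
    ∀ u ∈ (A.headAut hz).lang, ∀ v ∈ A.loopAut.lang, glen (u * v) = glen u + glen v := by
  intro u hu v hv
  rw [glen, FreeGroup.toWord_mul_of_mem_image (isReduced_append_of_mem_words hz hA) u hu v hv,
    List.length_append, glen, glen]

theorem mul_inj_of_mem_lang (hA : A.NoBacktrack) :
    ∀ u ∈ (A.headAut hz).lang, ∀ v ∈ A.loopAut.lang, ∀ u' ∈ (A.headAut hz).lang,
      ∀ v' ∈ A.loopAut.lang, u * v = u' * v' → u = u' ∧ v = v' :=
  FreeGroup.mul_inj_of_mem_image (isPrefixFree_words_headAut hz)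
    (isReduced_append_of_mem_words hz hA)

end PAut

section ReducedWords

variable (α : Type*)

def reducedWords (k : ℕ) : Set (List (α × Bool)) :=
  {w | FreeGroup.IsReduced w ∧ w.length = k}

variable {α}

theorem ncard_reducedWords_zero : (reducedWords α 0).ncard = 1 := by
  convert ncard_singleton ([] : List (α × Bool))
  ext w
  simp +contextual [reducedWords, FreeGroup.IsReduced.nil]

variable [Finite α]

theorem finite_reducedWords (k : ℕ) : (reducedWords α k).Finite :=
  (List.finite_length_eq _ k).subset fun _ hw => hw.2

theorem ncard_reducedWords_succ_le {k n : ℕ}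
    (hn : ∀ v ∈ reducedWords α k, {a | FreeGroup.IsReduced (a :: v)}.ncard ≤ n) :
    (reducedWords α (k + 1)).ncard ≤ n * (reducedWords α k).ncard := by
  classical
  rw [ncard_eq_toFinset_card _ (finite_reducedWords _),
    ncard_eq_toFinset_card _ (finite_reducedWords _)]
  refine Finset.card_le_mul_card_image_of_maps_to (f := List.tail) (fun w hw => ?_) n
    fun v hv => ?_
  · rw [Finite.mem_toFinset] at hw ⊢
    exact ⟨hw.1.infix w.tail_suffix.isInfix, by simp [hw.2]⟩
  · rw [Finite.mem_toFinset] at hv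
    refine le_trans ?_ (hn v hv)
    rw [← ncard_coe_finset, ← ncard_image_of_injective {a | FreeGroup.IsReduced (a :: v)}
      (f := (· :: v)) fun _ _ h => List.head_eq_of_cons_eq h]
    refine ncard_le_ncard fun w hw => ?_
    obtain ⟨hw', rfl⟩ := Finset.mem_filter.mp hw
    obtain ⟨hred, hlen⟩ := (finite_reducedWords _).mem_toFinset.mp hw'
    obtain ⟨a, v, rfl⟩ := List.exists_cons_of_length_eq_add_one hlen
    exact ⟨a, hred, rfl⟩

theorem ncard_reducedWords_le (k : ℕ) :
    (reducedWords α (k + 1)).ncard ≤ 2 * Nat.card α * (2 * Nat.card α - 1) ^ k := by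
  have hcard : Nat.card (α × Bool) = 2 * Nat.card α := by simp [mul_comm]
  induction k with
  | zero =>
    have := ncard_reducedWords_succ_le (k := 0) fun v _ => hcard ▸ ncard_le_card _
    rw [ncard_reducedWords_zero] at this
    simpa using this
  | succ k ih =>
    refine (ncard_reducedWords_succ_le (n := 2 * Nat.card α - 1) fun v hv => ?_).trans ?_
    · obtain ⟨b, v, rfl⟩ := List.exists_cons_of_length_eq_add_one hv.2
      calc {a | FreeGroup.IsReduced (a :: b :: v)}.ncard ≤ (univ \ {(b.1, !b.2)}).ncard := by
            refine ncard_le_ncard fun a ha => ⟨trivial, ?_⟩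
            rintro rfl
            simp [FreeGroup.isReduced_cons_cons] at ha
        _ = 2 * Nat.card α - 1 := by
            rw [ncard_sdiff_singleton_of_mem (mem_univ _), ncard_univ, hcard]
    · rw [pow_succ, mul_comm _ (2 * Nat.card α - 1), mul_left_comm]
      exact Nat.mul_le_mul_left _ ih

end ReducedWords

section GeneratingFunctions

variable {m : ℕ}

theorem glen_eq_zero_iff {g : FG m} : glen g = 0 ↔ g = 1 := by
  rw [glen, List.length_eq_zero_iff, FreeGroup.toWord_eq_nil_iff]

theorem finite_setOf_glen_eq (k : ℕ) : {g : FG m | glen g = k}.Finite :=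
  (List.finite_length_eq _ k).preimage FreeGroup.toWord_injective.injOn

theorem nk_zero_eq_zero {R : Set (FG m)} (h : 1 ∉ R) : nk R 0 = 0 := by
  rw [nk, ncard_eq_zero ((finite_setOf_glen_eq 0).subset fun _ hg => hg.2)]
  exact eq_empty_of_forall_notMem fun g ⟨hg, hg0⟩ => h (glen_eq_zero_iff.mp hg0 ▸ hg)

theorem nk_le_ncard_reducedWords (R : Set (FG m)) (k : ℕ) :
    nk R k ≤ (reducedWords (Fin m) k).ncard :=
  ncard_le_ncard_of_injOn FreeGroup.toWord (fun _ hg => ⟨FreeGroup.isReduced_toWord, hg.2⟩)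
    FreeGroup.toWord_injective.injOn (finite_reducedWords k)

theorem one_le_two_mul_sub_one (hm : 1 ≤ m) : (1 : ℝ) ≤ 2 * m - 1 := by
  have : (1 : ℝ) ≤ m := by exact_mod_cast hm
  linarith

theorem nk_le_sphereCard (hm : 1 ≤ m) (R : Set (FG m)) (k : ℕ) :
    (nk R k : ℝ) ≤ sphereCard m k := by
  rcases k with _ | k
  · have := nk_le_ncard_reducedWords R 0
    rw [ncard_reducedWords_zero] at this
    simpa [sphereCard] using this
  · have := (nk_le_ncard_reducedWords R (k + 1)).trans (ncard_reducedWords_le k)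
    rw [Nat.card_fin] at this
    have hcast : ((2 * m - 1 : ℕ) : ℝ) = 2 * m - 1 := by
      rw [Nat.cast_sub (by omega)]
      push_cast
      ring
    simpa [sphereCard, hcast] using (Nat.cast_le (α := ℝ)).mpr this

theorem sphereCard_pos (hm : 1 ≤ m) (k : ℕ) : 0 < sphereCard m k := by
  have := one_le_two_mul_sub_one hm
  unfold sphereCard
  split_ifs
  · exact one_pos
  · have : (0 : ℝ) < m := by exact_mod_cast hm
    positivity

theorem sphereCard_le (hm : 1 ≤ m) (k : ℕ) : sphereCard m k ≤ 2 * m * (2 * m - 1) ^ k := by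
  have hq := one_le_two_mul_sub_one hm
  unfold sphereCard
  split_ifs with hk
  · subst hk
    linarith
  · have : (0 : ℝ) ≤ m := by positivity
    gcongr
    omega

theorem sphereCard_add {i : ℕ} (hi : i ≠ 0) (j : ℕ) :
    sphereCard m (i + j) = sphereCard m i * (2 * m - 1) ^ j := by
  rw [sphereCard, sphereCard, if_neg (by omega), if_neg hi, mul_assoc (2 * (m : ℝ)), ← pow_add,
    Nat.sub_add_comm (Nat.one_le_iff_ne_zero.mpr hi)]

theorem summable_norm_fk_mul_pow (hm : 1 ≤ m) (R : Set (FG m)) {t : ℝ} (ht : |t| < 1) :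
    Summable fun k => ‖fk R k * t ^ k‖ := by
  refine .of_nonneg_of_le (fun _ => norm_nonneg _) (fun k => ?_)
    (summable_geometric_of_lt_one (abs_nonneg t) ht)
  have h0 : 0 ≤ fk R k := div_nonneg (Nat.cast_nonneg _) (sphereCard_pos hm k).le
  have h1 : fk R k ≤ 1 := (div_le_one (sphereCard_pos hm k)).mpr (nk_le_sphereCard hm R k)
  rw [norm_mul, norm_pow, Real.norm_of_nonneg h0, Real.norm_eq_abs]
  exact mul_le_of_le_one_left (by positivity) h1

theorem summable_norm_nk_mul_pow (hm : 1 ≤ m) (R : Set (FG m)) {t : ℝ} (ht : |t| < 1) :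
    Summable fun k => ‖(nk R k : ℝ) * (t / (2 * m - 1)) ^ k‖ := by
  have hq := one_le_two_mul_sub_one hm
  refine .of_nonneg_of_le (fun _ => norm_nonneg _) (fun k => ?_)
    ((summable_geometric_of_lt_one (abs_nonneg t) ht).mul_left (2 * m : ℝ))
  rw [norm_mul, norm_pow, norm_div, Real.norm_natCast, Real.norm_eq_abs, Real.norm_of_nonneg
    (by linarith), div_pow, mul_div_assoc', div_le_iff₀ (by positivity), mul_assoc,
    mul_comm (|t| ^ k), ← mul_assoc]
  gcongr
  exact (nk_le_sphereCard hm R k).trans (sphereCard_le hm k)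

end GeneratingFunctions

section Product

open Finset.HasAntidiagonal

variable {m : ℕ} {R R₁ R₂ : Set (FG m)}

theorem nk_eq_sum_antidiagonal
    (hR : R = {g | ∃ u ∈ R₁, ∃ v ∈ R₂, g = u * v})
    (hlen : ∀ u ∈ R₁, ∀ v ∈ R₂, glen (u * v) = glen u + glen v)
    (hinj : ∀ u ∈ R₁, ∀ v ∈ R₂, ∀ u' ∈ R₁, ∀ v' ∈ R₂, u * v = u' * v' → u = u' ∧ v = v')
    (k : ℕ) : nk R k = ∑ p ∈ antidiagonal k, nk R₁ p.1 * nk R₂ p.2 := by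
  set S : ℕ × ℕ → Set (FG m × FG m) := fun p => {u ∈ R₁ | glen u = p.1} ×ˢ {v ∈ R₂ | glen v = p.2}
  have hmem : ∀ q, q ∈ ⋃ p ∈ (antidiagonal k : Set (ℕ × ℕ)), S p ↔
      (q.1 ∈ R₁ ∧ q.2 ∈ R₂) ∧ glen q.1 + glen q.2 = k := by
    intro q
    simp only [S, mem_iUnion, Finset.mem_coe, Finset.HasAntidiagonal.mem_antidiagonal, mem_prod]
    constructor
    · rintro ⟨p, hp, ⟨hu, hpu⟩, ⟨hv, hpv⟩⟩
      exact ⟨⟨hu, hv⟩, by rw [hpu, hpv, hp]⟩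
    · rintro ⟨⟨hu, hv⟩, rfl⟩
      exact ⟨(glen q.1, glen q.2), rfl, ⟨hu, rfl⟩, ⟨hv, rfl⟩⟩
  have hslice : {g ∈ R | glen g = k} =
      (fun q => q.1 * q.2) '' ⋃ p ∈ (antidiagonal k : Set (ℕ × ℕ)), S p := by
    ext g
    simp only [image, hmem, hR]
    constructor
    · rintro ⟨⟨u, hu, v, hv, rfl⟩, rfl⟩
      exact ⟨(u, v), ⟨⟨hu, hv⟩, (hlen u hu v hv).symm⟩, rfl⟩
    · rintro ⟨q, ⟨⟨hu, hv⟩, rfl⟩, rfl⟩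
      exact ⟨⟨q.1, hu, q.2, hv, rfl⟩, hlen _ hu _ hv⟩
  have hinjOn : InjOn (fun q : FG m × FG m => q.1 * q.2)
      (⋃ p ∈ (antidiagonal k : Set (ℕ × ℕ)), S p) := by
    intro q hq q' hq' h
    rw [hmem] at hq hq'
    obtain ⟨h₁, h₂⟩ := hinj _ hq.1.1 _ hq.1.2 _ hq'.1.1 _ hq'.1.2 h
    exact Prod.ext h₁ h₂
  rw [nk, hslice, hinjOn.ncard_image, (Finset.finite_toSet _).ncard_biUnion,
    finsum_mem_coe_finset]
  · simp only [S, ncard_prod, nk]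
  · exact fun p _ => ((finite_setOf_glen_eq _).subset fun _ hu => hu.2).prod
      ((finite_setOf_glen_eq _).subset fun _ hv => hv.2)
  · intro p _ p' _ hpp'
    refine disjoint_left.mpr fun q hq hq' => hpp' ?_
    exact Prod.ext (hq.1.2.symm.trans hq'.1.2) (hq.2.2.symm.trans hq'.2.2)

theorem fk_mul_pow_eq_sum_antidiagonal (h1 : 1 ∉ R₁)
    (hconv : ∀ k, nk R k = ∑ p ∈ antidiagonal k, nk R₁ p.1 * nk R₂ p.2) (t : ℝ) (k : ℕ) :
    fk R k * t ^ k = ∑ p ∈ antidiagonal k,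
      fk R₁ p.1 * t ^ p.1 * ((nk R₂ p.2 : ℝ) * (t / (2 * m - 1)) ^ p.2) := by
  have hterm : ∀ p ∈ antidiagonal k,
      fk R₁ p.1 * t ^ p.1 * ((nk R₂ p.2 : ℝ) * (t / (2 * m - 1)) ^ p.2) =
        (nk R₁ p.1 * nk R₂ p.2 : ℝ) * t ^ k / sphereCard m k := by
    rintro ⟨i, j⟩ hij
    rw [Finset.HasAntidiagonal.mem_antidiagonal] at hij
    subst hij
    rcases eq_or_ne i 0 with rfl | hi
    · simp [fk, nk_zero_eq_zero h1]
    · rw [fk, sphereCard_add hi, div_pow, pow_add]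
      ring
  rw [Finset.sum_congr rfl hterm, ← Finset.sum_div, ← Finset.sum_mul, fk, hconv]
  push_cast
  ring

theorem genFun_eq_mul_genFunStar (hm : 1 ≤ m) (h1 : 1 ∉ R₁)
    (hconv : ∀ k, nk R k = ∑ p ∈ antidiagonal k, nk R₁ p.1 * nk R₂ p.2) {t : ℝ} (ht : |t| < 1) :
    genFun R t = genFun R₁ t * genFunStar R₂ t := by
  rw [genFun, genFun, genFunStar, tsum_mul_tsum_eq_tsum_sum_antidiagonal_of_summable_norm
    (summable_norm_fk_mul_pow hm R₁ ht) (summable_norm_nk_mul_pow hm R₂ ht)]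
  exact tsum_congr (fk_mul_pow_eq_sum_antidiagonal h1 hconv t)

end Product

theorem stmt5_general {m : ℕ} (hm : 2 ≤ m) (A : PAut m) (hA : A.IsSpecial) :
    ∃ R₁ R₂ : Set (FG m),
      (∃ A₁ : PAut m, A₁.IsSpecial ∧ R₁ = A₁.lang) ∧
      (1 : FG m) ∉ R₁ ∧
      IsSpecialMonoid R₂ ∧ (1 : FG m) ∈ R₂ ∧
      (∀ u ∈ R₁, ∀ v ∈ R₂, glen (u * v) = glen u + glen v) ∧
      A.lang = {g : FG m | ∃ u ∈ R₁, ∃ v ∈ R₂, g = u * v} ∧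
      (∀ u ∈ R₁, ∀ v ∈ R₂, ∀ u' ∈ R₁, ∀ v' ∈ R₂,
        u * v = u' * v' → u = u' ∧ v = v') ∧
      (∀ t ∈ Set.Ioo (-1 : ℝ) 1,
        genFun A.lang t = genFun R₁ t * genFunStar R₂ t) := by
  have hz := hA.haltAtAccept_reachable
  have hA₁ := PAut.isSpecial_headAut hz hA
  have hA₂ := PAut.isSpecialMonoidAut_loopAut hA.2.2
  have hlen := PAut.glen_mul_of_mem_lang hz hA.2.2.noBacktrack
  have hinj := PAut.mul_inj_of_mem_lang hz hA.2.2.noBacktrack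
  have hlang := PAut.lang_eq_mul hz
  exact ⟨_, _, ⟨_, hA₁, rfl⟩, hA₁.one_notMem_lang, ⟨_, hA₂, rfl⟩, hA₂.one_mem_lang, hlen, hlang,
    hinj, fun t ht => genFun_eq_mul_genFunStar (by omega) hA₁.one_notMem_lang
      (nk_eq_sum_antidiagonal hlang hlen hinj) (abs_lt.mpr ht)⟩

/-- splitting of a saturated special automaton: `R = R₁ ∘ R₂`
unambiguously, with `R₁` special and `R₂` a special monoid, and the generating
function is multiplicative. -/
theorem stmt5 {m : ℕ} (hm : 2 ≤ m) (A : PAut m) (hA : A.IsSpecial)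
    (hout : ∃ a s', A.step A.accept a = some s') :
    ∃ R₁ R₂ : Set (FG m),
      (∃ A₁ : PAut m, A₁.IsSpecial ∧ R₁ = A₁.lang) ∧
      (1 : FG m) ∉ R₁ ∧
      IsSpecialMonoid R₂ ∧ (1 : FG m) ∈ R₂ ∧
      (∀ u ∈ R₁, ∀ v ∈ R₂, glen (u * v) = glen u + glen v) ∧
      A.lang = {g : FG m | ∃ u ∈ R₁, ∃ v ∈ R₂, g = u * v} ∧
      (∀ u ∈ R₁, ∀ v ∈ R₂, ∀ u' ∈ R₁, ∀ v' ∈ R₂,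
        u * v = u' * v' → u = u' ∧ v = v') ∧
      (∀ t ∈ Set.Ioo (-1 : ℝ) 1,
        genFun A.lang t = genFun R₁ t * genFunStar R₂ t) :=
  stmt5_general hm A hA
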